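/- arXiv:2604.25156 — 7 statements merged into one kernel-verified Lean document; each statement's English description precedes it below -/
import Mathlib

section
/- Let (A_t)_{t≥0} be the non-stationary single-edge process with parameters (θ_t, δ_t)_{t≥1}. Then for all integers 0 ≤ r ≤ s, Cov(A_r, A_s) = Var(A_r) · ∏_{t=r+1}^{s} (1 − θ_t − δ_t), where the empty product (case r = s) equals 1. -/
/-!
Write `p_t = P(E_t = 0) = 1 - θ_t - δ_t`. The pair `(A_r, A_s)` is a function of
`(A_0, E_1, …, E_s)`, hence independent of `E_{s+1}`, so conditioning on the value of `E_{s+1}`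
in `A_{s+1} = A_s·1{E_{s+1}=0} + 1{E_{s+1}=1}` gives
`E[f·A_{s+1}] = p_{s+1}·E[f·A_s] + θ_{s+1}·E[f]` both for `f = 1` and for `f = A_r`.
Subtracting, `Cov(A_r, A_{s+1}) = p_{s+1}·Cov(A_r, A_s)`, and induction on `s` starting from
`Cov(A_r, A_r) = Var(A_r)` gives the product formula.
-/

open MeasureTheory ProbabilityTheory Finset
open scoped Classical

namespace ProbabilityTheory

variable {Ω : Type*} [MeasurableSpace Ω] {P : Measure Ω}

lemma measurable_ite_eq_one_zero (x : ℝ) :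
    Measurable fun y : ℝ => if y = x then (1 : ℝ) else 0 :=
  Measurable.ite (measurableSet_singleton x) measurable_const measurable_const

lemma integral_ite_eq_one_zero {e : Ω → ℝ} (he : Measurable e) (x : ℝ) :
    ∫ ω, (if e ω = x then (1 : ℝ) else 0) ∂P = P.real {ω | e ω = x} :=
  integral_indicator_one (he (measurableSet_singleton x))

lemma IndepFun.integral_mul_ite_eq {g e : Ω → ℝ} (hge : IndepFun g e P)
    (hg : AEStronglyMeasurable g P) (he : Measurable e) (x : ℝ) :
    ∫ ω, g ω * (if e ω = x then (1 : ℝ) else 0) ∂P = (∫ ω, g ω ∂P) * P.real {ω | e ω = x} := by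
  rw [← integral_ite_eq_one_zero he x]
  exact (hge.comp measurable_id (measurable_ite_eq_one_zero x)).integral_fun_mul_eq_mul_integral
    hg ((measurable_ite_eq_one_zero x).comp he).aestronglyMeasurable

lemma IndepFun.integrable_mul_ite [IsFiniteMeasure P] {g e : Ω → ℝ} (hge : IndepFun g e P)
    (hg : Integrable g P) (he : Measurable e) (x : ℝ) :
    Integrable (fun ω => g ω * if e ω = x then (1 : ℝ) else 0) P := by
  refine (hge.comp measurable_id (measurable_ite_eq_one_zero x)).integrable_mul hg ?_
  refine Integrable.of_bound ((measurable_ite_eq_one_zero x).comp he).aestronglyMeasurable 1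
    (ae_of_all _ fun ω => ?_)
  simp only [Function.comp_apply]
  split_ifs <;> simp

lemma IndepFun.integral_mul_arStep [IsFiniteMeasure P] {g a e : Ω → ℝ}
    (hind : IndepFun (fun ω => (g ω, a ω)) e P) (hg : Integrable g P)
    (hga : Integrable (g * a) P) (he : Measurable e) :
    ∫ ω, g ω * (a ω * (if e ω = 0 then 1 else 0) + if e ω = 1 then 1 else 0) ∂P =
      (∫ ω, g ω * a ω ∂P) * P.real {ω | e ω = 0} + (∫ ω, g ω ∂P) * P.real {ω | e ω = 1} := by
  have hg_e : IndepFun g e P := hind.comp measurable_fst measurable_id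
  have hga_e : IndepFun (g * a) e P :=
    hind.comp (measurable_fst.mul measurable_snd) measurable_id
  simp_rw [mul_add, ← mul_assoc]
  refine (integral_add (hga_e.integrable_mul_ite hga he 0)
    (hg_e.integrable_mul_ite hg he 1)).trans ?_
  rw [hga_e.integral_mul_ite_eq hga.aestronglyMeasurable he 0,
    hg_e.integral_mul_ite_eq hg.aestronglyMeasurable he 1]
  rfl

lemma IndepFun.integral_mul_sub_arStep [IsProbabilityMeasure P] {f a b e : Ω → ℝ}
    (hind : IndepFun (fun ω => (f ω, a ω)) e P) (hf : MemLp f 2 P) (ha : MemLp a 2 P)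
    (he : Measurable e)
    (hb : ∀ ω, b ω = a ω * (if e ω = 0 then 1 else 0) + if e ω = 1 then 1 else 0) :
    (∫ ω, f ω * b ω ∂P) - (∫ ω, f ω ∂P) * (∫ ω, b ω ∂P) =
      ((∫ ω, f ω * a ω ∂P) - (∫ ω, f ω ∂P) * (∫ ω, a ω ∂P)) * P.real {ω | e ω = 0} := by
  have hone : IndepFun (fun ω => ((1 : ℝ), a ω)) e P :=
    hind.comp (measurable_const.prodMk measurable_snd) measurable_id
  have hmean := hone.integral_mul_arStep (integrable_const 1)
    (by simpa [Pi.mul_def] using ha.integrable one_le_two) he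
  have hmixed := hind.integral_mul_arStep (hf.integrable one_le_two) (hf.integrable_mul ha) he
  simp only [one_mul, integral_const, probReal_univ, one_smul] at hmean
  simp only [hb, hmean, hmixed]
  ring

lemma iIndepFun.indepFun_of_measurable_natural {ι β γ : Type*} [LinearOrder ι]
    [MeasurableSpace β] [NormedAddCommGroup β] [BorelSpace β] [MeasurableSpace γ]
    {X : ι → Ω → β} (hX : ∀ i, StronglyMeasurable (X i)) (hXi : iIndepFun X P) {i j : ι}
    (hij : i < j) {f : Ω → γ} (hf : Measurable[Filtration.natural X hX i] f) :
    IndepFun f (X j) P := by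
  rw [IndepFun_iff_Indep]
  exact indep_of_indep_of_le_left (hXi.indep_comap_natural_of_lt hX hij).symm hf.comap_le

lemma measureReal_eq_zero_of_mem_neg_one_zero_one [IsProbabilityMeasure P] {e : Ω → ℝ}
    (he : Measurable e) (hval : ∀ ω, e ω ∈ ({-1, 0, 1} : Set ℝ)) :
    P.real {ω | e ω = 0} = 1 - P.real {ω | e ω = 1} - P.real {ω | e ω = -1} := by
  have hsum := sum_measureReal_preimage_singleton (μ := P) ({-1, 0, 1} : Finset ℝ)
    (fun y _ => he (measurableSet_singleton y))
  have huniv : e ⁻¹' ↑({-1, 0, 1} : Finset ℝ) = Set.univ := by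
    ext ω; simpa using hval ω
  rw [huniv, probReal_univ, sum_insert (by norm_num), sum_insert (by norm_num), sum_singleton]
    at hsum
  change P.real (e ⁻¹' {0}) = 1 - P.real (e ⁻¹' {1}) - P.real (e ⁻¹' {-1})
  linarith

end ProbabilityTheory

section ArStepRecursion

variable {Ω : Type*} {E A : ℕ → Ω → ℝ}

lemma abs_le_one_of_arStep_rec
    (hrec : ∀ t ω, A (t + 1) ω =
      A t ω * (if E (t + 1) ω = 0 then 1 else 0) + (if E (t + 1) ω = 1 then 1 else 0))
    (hA0 : ∀ ω, |A 0 ω| ≤ 1) : ∀ t ω, |A t ω| ≤ 1 := by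
  intro t
  induction t with
  | zero => exact hA0
  | succ t ih =>
    intro ω
    rw [hrec]
    split_ifs <;> simp_all

lemma measurable_of_arStep_rec [mΩ : MeasurableSpace Ω] (F : Filtration ℕ mΩ)
    (hrec : ∀ t ω, A (t + 1) ω =
      A t ω * (if E (t + 1) ω = 0 then 1 else 0) + (if E (t + 1) ω = 1 then 1 else 0))
    (hA0 : Measurable[F 0] (A 0)) (hE : ∀ t, Measurable[F (t + 1)] (E (t + 1))) :
    ∀ t, Measurable[F t] (A t) := by
  intro t
  induction t with
  | zero => exact hA0
  | succ t ih =>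
    have hind (x : ℝ) : Measurable[F (t + 1)] fun ω => if E (t + 1) ω = x then (1 : ℝ) else 0 :=
      (measurable_ite_eq_one_zero x).comp (hE t)
    rw [show A (t + 1) = _ from funext (hrec t)]
    exact ((ih.mono (F.mono t.le_succ) le_rfl).mul (hind 0)).add (hind 1)

end ArStepRecursion

theorem stmt1_general
    {Ω : Type*} [MeasurableSpace Ω] (P : Measure Ω) [IsProbabilityMeasure P]
    (c : ℝ) (hc0 : 0 < c)
    (θ δ : ℕ → ℝ)
    (hθ : ∀ t, 1 ≤ t → θ t ∈ Set.Icc c (1 - c))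
    (hδ : ∀ t, 1 ≤ t → δ t ∈ Set.Icc c (1 - c))
    (E : ℕ → Ω → ℝ) (A : ℕ → Ω → ℝ)
    (hEmeas : ∀ t, Measurable (E t)) (hA0meas : Measurable (A 0))
    (hEval : ∀ t, 1 ≤ t → ∀ ω, E t ω ∈ ({-1, 0, 1} : Set ℝ))
    (hA0val : ∀ ω, A 0 ω ∈ ({0, 1} : Set ℝ))
    (hE1 : ∀ t, 1 ≤ t → P {ω | E t ω = 1} = ENNReal.ofReal (θ t))
    (hEneg : ∀ t, 1 ≤ t → P {ω | E t ω = -1} = ENNReal.ofReal (δ t))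
    (hIndep : iIndepFun
      (fun n : ℕ => if n = 0 then A 0 else E n) P)
    (hrec : ∀ t ω, A (t + 1) ω =
      A t ω * (if E (t + 1) ω = 0 then 1 else 0) +
        (if E (t + 1) ω = 1 then 1 else 0)) :
    ∀ r s : ℕ, r ≤ s →
      (∫ ω, A r ω * A s ω ∂P) - (∫ ω, A r ω ∂P) * (∫ ω, A s ω ∂P) =
        variance (A r) P * ∏ t ∈ Finset.Ioc r s, (1 - θ t - δ t) := by
  intro r s hrs
  set X : ℕ → Ω → ℝ := fun n => if n = 0 then A 0 else E n
  have hXm (n : ℕ) : StronglyMeasurable (X n) := by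
    rcases n with _ | n
    exacts [hA0meas.stronglyMeasurable, (hEmeas _).stronglyMeasurable]
  set F := Filtration.natural X hXm
  have hXF (n : ℕ) : Measurable[F n] (X n) :=
    (Filtration.stronglyAdapted_natural hXm n).measurable
  have hAF := measurable_of_arStep_rec F hrec (hXF 0) (fun t => hXF (t + 1))
  have hA2 (t : ℕ) : MemLp (A t) 2 P := by
    have hA0 (ω : Ω) : |A 0 ω| ≤ 1 := by
      obtain h | h : A 0 ω = 0 ∨ A 0 ω = 1 := hA0val ω <;> simp [h]
    exact MemLp.of_bound ((hAF t).mono (F.le t) le_rfl).aestronglyMeasurable 1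
      (ae_of_all _ (abs_le_one_of_arStep_rec hrec hA0 t))
  have hp0 (t : ℕ) (ht : 1 ≤ t) : P.real {ω | E t ω = 0} = 1 - θ t - δ t := by
    rw [measureReal_eq_zero_of_mem_neg_one_zero_one (hEmeas t) (hEval t ht), measureReal_def,
      measureReal_def, hE1 t ht, hEneg t ht, ENNReal.toReal_ofReal (hc0.le.trans (hθ t ht).1),
      ENNReal.toReal_ofReal (hc0.le.trans (hδ t ht).1)]
  induction s, hrs using Nat.le_induction with
  | base =>
    rw [Ioc_self, prod_empty, mul_one, ← covariance_self (hA2 r).aemeasurable,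
      covariance_eq_sub (hA2 r) (hA2 r)]
    rfl
  | succ s hrs ih =>
    have hind : IndepFun (fun ω => (A r ω, A s ω)) (E (s + 1)) P := by
      simpa [X] using hIndep.indepFun_of_measurable_natural hXm s.lt_succ_self
        (((hAF r).mono (F.mono hrs) le_rfl).prodMk (hAF s))
    rw [hind.integral_mul_sub_arStep (hA2 r) (hA2 s) (hEmeas _) (hrec s), ih,
      hp0 _ s.succ_pos, prod_Ioc_succ_top hrs, mul_assoc]

/-- **Covariance of the non-stationary AR(1) edge process.** With
`A_{t+1} = A_t·1{E_{t+1}=0} + 1{E_{t+1}=1}`, `(A_0, E_1, E_2, …)` mutually independent,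
`P(E_t = 1) = θ_t`, `P(E_t = −1) = δ_t` and `c ≤ P(A_0 = 1) ≤ 1 − c`, for all
`0 ≤ r ≤ s`: `Cov(A_r, A_s) = Var(A_r) · ∏_{t=r+1}^{s} (1 − θ_t − δ_t)` (the empty
product, for `r = s`, equals 1). -/
theorem stmt1
    {Ω : Type*} [MeasurableSpace Ω] (P : Measure Ω) [IsProbabilityMeasure P]
    (c : ℝ) (hc0 : 0 < c) (hc : c < 1 / 2)
    (θ δ : ℕ → ℝ)
    (hθ : ∀ t, 1 ≤ t → θ t ∈ Set.Icc c (1 - c))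
    (hδ : ∀ t, 1 ≤ t → δ t ∈ Set.Icc c (1 - c))
    (E : ℕ → Ω → ℝ) (A : ℕ → Ω → ℝ)
    (hEmeas : ∀ t, Measurable (E t)) (hA0meas : Measurable (A 0))
    (hEval : ∀ t, 1 ≤ t → ∀ ω, E t ω ∈ ({-1, 0, 1} : Set ℝ))
    (hA0val : ∀ ω, A 0 ω ∈ ({0, 1} : Set ℝ))
    (hE1 : ∀ t, 1 ≤ t → P {ω | E t ω = 1} = ENNReal.ofReal (θ t))
    (hEneg : ∀ t, 1 ≤ t → P {ω | E t ω = -1} = ENNReal.ofReal (δ t))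
    (hA0low : c ≤ (P {ω | A 0 ω = 1}).toReal)
    (hA0high : (P {ω | A 0 ω = 1}).toReal ≤ 1 - c)
    (hIndep : iIndepFun
      (fun n : ℕ => if n = 0 then A 0 else E n) P)
    (hrec : ∀ t ω, A (t + 1) ω =
      A t ω * (if E (t + 1) ω = 0 then 1 else 0) +
        (if E (t + 1) ω = 1 then 1 else 0)) :
    ∀ r s : ℕ, r ≤ s →
      (∫ ω, A r ω * A s ω ∂P) - (∫ ω, A r ω ∂P) * (∫ ω, A s ω ∂P) =
        variance (A r) P * ∏ t ∈ Finset.Ioc r s, (1 - θ t - δ t) :=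
  stmt1_general P c hc0 θ δ hθ hδ E A hEmeas hA0meas hEval hA0val hE1 hEneg hIndep hrec
end

section
/- Let (A_t)_{t≥0} be the non-stationary single-edge process with parameters (θ_t, δ_t)_{t≥1} ⊂ [c, 1−c]. Then for all integers r, s ≥ 0, 0 ≤ Cov(A_r, A_s) ≤ (1/4)·(1 − 2c)^{|r−s|}. -/
/-!
Write `S_t = 1{E_t = 0}` and `J_t = 1{E_t = 1}`, so that `A_{t+1} = A_t S_{t+1} + J_{t+1}` with
`(S_{t+1}, J_{t+1})` independent of `(A_0, E_1, …, E_t)`. Multiplying by `A_r` and integrating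
shows `Cov(A_r, A_{t+1}) = E[S_{t+1}] · Cov(A_r, A_t)` for `r ≤ t`, hence
`Cov(A_r, A_{r+k}) = (∏_{i=1}^k E[S_{r+i}]) · Var(A_r)`. Each factor lies in `[0, 1 - 2c]`
because `P(E_t = 1), P(E_t = -1) ≥ c`, and `Var(A_r) = p(1 - p) ∈ [0, 1/4]` since `A_r` is
`{0,1}`-valued.
-/

open MeasureTheory ProbabilityTheory
open scoped Classical

namespace ProbabilityTheory

variable {Ω : Type*} {mΩ : MeasurableSpace Ω} {P : Measure Ω}

lemma Indep.indepFun_of_measurable {m₁ m₂ : MeasurableSpace Ω} (h : Indep m₁ m₂ P)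
    {β γ : Type*} [MeasurableSpace β] [MeasurableSpace γ] {f : Ω → β} {g : Ω → γ}
    (hf : Measurable[m₁] f) (hg : Measurable[m₂] g) : IndepFun f g P :=
  (IndepFun_iff_Indep f g P).2 (indep_of_indep_of_le h hf.comap_le hg.comap_le)

lemma iIndep.indep_iSup_Iic_succ {m : ℕ → MeasurableSpace Ω} (hle : ∀ i, m i ≤ mΩ)
    (h : iIndep m P) (n : ℕ) : Indep (⨆ i ∈ Set.Iic n, m i) (m (n + 1)) P := by
  simpa using indep_iSup_of_disjoint hle h (S := Set.Iic n) (T := {n + 1}) (by simp)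

end ProbabilityTheory

section Integrals

variable {Ω : Type*} {mΩ : MeasurableSpace Ω} {P : Measure Ω}

lemma measurable_ite_eq_one_zero {e : Ω → ℝ} (he : Measurable e) (z : ℝ) :
    Measurable fun ω => if e ω = z then (1 : ℝ) else 0 :=
  (Measurable.ite (p := (· = z)) (measurableSet_singleton z) measurable_const
    measurable_const).comp he

lemma integrable_of_abs_le_one [IsFiniteMeasure P] {f : Ω → ℝ} (hf : Measurable f)
    (hf1 : ∀ ω, |f ω| ≤ 1) : Integrable f P :=
  .of_bound hf.aestronglyMeasurable 1 (ae_of_all _ hf1)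

lemma integral_mul_self_sub_sq_mem_Icc [IsProbabilityMeasure P] {f : Ω → ℝ} (hf : Measurable f)
    (h01 : ∀ ω, f ω = 0 ∨ f ω = 1) :
    (∫ ω, f ω * f ω ∂P) - (∫ ω, f ω ∂P) * (∫ ω, f ω ∂P) ∈ Set.Icc 0 (1 / 4) := by
  have hsq : ∀ ω, f ω * f ω = f ω := fun ω => by rcases h01 ω with h | h <;> simp [h]
  have hf1 : ∀ ω, f ω ≤ 1 := fun ω => by rcases h01 ω with h | h <;> simp [h]
  have hmean0 : 0 ≤ ∫ ω, f ω ∂P :=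
    integral_nonneg fun ω => by rcases h01 ω with h | h <;> simp [h]
  have hmean1 : ∫ ω, f ω ∂P ≤ 1 := by
    have hint : Integrable f P :=
      integrable_of_abs_le_one hf fun ω => by rcases h01 ω with h | h <;> simp [h]
    simpa using integral_mono hint (integrable_const (1 : ℝ)) hf1
  simp_rw [hsq]
  constructor <;> nlinarith [sq_nonneg (2 * ∫ ω, f ω ∂P - 1)]

lemma integral_ite_eq_zero_le_one_sub_two_mul [IsProbabilityMeasure P] {e : Ω → ℝ}
    (he : Measurable e) {c θ δ : ℝ} (hθ : c ≤ θ) (hδ : c ≤ δ)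
    (h1 : P {ω | e ω = 1} = ENNReal.ofReal θ) (hneg : P {ω | e ω = -1} = ENNReal.ofReal δ) :
    ∫ ω, (if e ω = 0 then (1 : ℝ) else 0) ∂P ≤ 1 - 2 * c := by
  have hmeas : ∀ a : ℝ, MeasurableSet {ω | e ω = a} := fun a => he (measurableSet_singleton a)
  have hint : ∫ ω, (if e ω = 0 then (1 : ℝ) else 0) ∂P = P.real {ω | e ω = 0} := by
    rw [← integral_indicator_one (hmeas 0)]
    rfl
  have htotal : P.real {ω | e ω = 0} + P.real {ω | e ω = 1} + P.real {ω | e ω = -1} ≤ 1 := by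
    rw [← measureReal_union _ (hmeas 1), ← measureReal_union _ (hmeas (-1))]
    · exact measureReal_le_one
    all_goals
      refine Set.disjoint_left.2 fun ω h h' => ?_
      simp only [Set.mem_union, Set.mem_ofPred_eq] at h h'
      norm_num [h'] at h
  have hP1 : c ≤ P.real {ω | e ω = 1} := by
    rw [measureReal_def, h1, ENNReal.toReal_ofReal']
    exact le_max_of_le_left hθ
  have hPneg : c ≤ P.real {ω | e ω = -1} := by
    rw [measureReal_def, hneg, ENNReal.toReal_ofReal']
    exact le_max_of_le_left hδ
  linarith

lemma integral_mul_sub_mul_integral_mul_add_of_indep {m₁ m₂ : MeasurableSpace Ω} (h : Indep m₁ m₂ P)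
    {X Y S J : Ω → ℝ} (hX : Measurable[m₁] X) (hY : Measurable[m₁] Y)
    (hS : Measurable[m₂] S) (hJ : Measurable[m₂] J) (iX : Integrable X P) (iY : Integrable Y P)
    (iXY : Integrable (X * Y) P) (iS : Integrable S P) (iJ : Integrable J P) :
    (∫ ω, X ω * (Y ω * S ω + J ω) ∂P) - (∫ ω, X ω ∂P) * ∫ ω, Y ω * S ω + J ω ∂P =
      (∫ ω, S ω ∂P) * ((∫ ω, X ω * Y ω ∂P) - (∫ ω, X ω ∂P) * ∫ ω, Y ω ∂P) := by
  have hXY_S : IndepFun (X * Y) S P := h.indepFun_of_measurable (hX.mul hY) hS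
  have hX_J : IndepFun X J P := h.indepFun_of_measurable hX hJ
  have hY_S : IndepFun Y S P := h.indepFun_of_measurable hY hS
  have hcross : ∫ ω, X ω * (Y ω * S ω + J ω) ∂P =
      (∫ ω, X ω * Y ω ∂P) * (∫ ω, S ω ∂P) + (∫ ω, X ω ∂P) * ∫ ω, J ω ∂P := by
    have iXYS : Integrable (fun ω => X ω * Y ω * S ω) P := hXY_S.integrable_mul iXY iS
    have iXJ : Integrable (fun ω => X ω * J ω) P := hX_J.integrable_mul iX iJ
    simp_rw [mul_add, ← mul_assoc]
    rw [integral_add iXYS iXJ]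
    exact congrArg₂ (· + ·) (hXY_S.integral_mul_eq_mul_integral iXY.1 iS.1)
      (hX_J.integral_fun_mul_eq_mul_integral iX.1 iJ.1)
  have hmean : ∫ ω, Y ω * S ω + J ω ∂P = (∫ ω, Y ω ∂P) * (∫ ω, S ω ∂P) + ∫ ω, J ω ∂P := by
    have iYS : Integrable (fun ω => Y ω * S ω) P := hY_S.integrable_mul iY iS
    rw [integral_add iYS iJ, hY_S.integral_fun_mul_eq_mul_integral iY.1 iS.1]
  rw [hcross, hmean]
  ring

end Integrals

section Recursion

variable {Ω : Type*} {mΩ : MeasurableSpace Ω} {P : Measure Ω}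
  {m : ℕ → MeasurableSpace Ω} {X S J : ℕ → Ω → ℝ}

lemma measurable_iSup_Iic_of_recursion (hX0 : Measurable[m 0] (X 0))
    (hS : ∀ t, Measurable[m (t + 1)] (S (t + 1))) (hJ : ∀ t, Measurable[m (t + 1)] (J (t + 1)))
    (hrec : ∀ t ω, X (t + 1) ω = X t ω * S (t + 1) ω + J (t + 1) ω) (n : ℕ) :
    Measurable[⨆ i ∈ Set.Iic n, m i] (X n) := by
  induction n with
  | zero => exact hX0.mono (le_biSup m Set.self_mem_Iic) le_rfl
  | succ n ih =>
    have hpast : ⨆ i ∈ Set.Iic n, m i ≤ ⨆ i ∈ Set.Iic (n + 1), m i :=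
      biSup_mono fun i hi => Set.Iic_subset_Iic.2 n.le_succ hi
    have hnew : m (n + 1) ≤ ⨆ i ∈ Set.Iic (n + 1), m i := le_biSup m Set.self_mem_Iic
    rw [show X (n + 1) = fun ω => X n ω * S (n + 1) ω + J (n + 1) ω from funext (hrec n)]
    exact ((ih.mono hpast le_rfl).mul ((hS n).mono hnew le_rfl)).add ((hJ n).mono hnew le_rfl)

lemma measurable_of_recursion (hle : ∀ i, m i ≤ mΩ) (hX0 : Measurable[m 0] (X 0))
    (hS : ∀ t, Measurable[m (t + 1)] (S (t + 1))) (hJ : ∀ t, Measurable[m (t + 1)] (J (t + 1)))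
    (hrec : ∀ t ω, X (t + 1) ω = X t ω * S (t + 1) ω + J (t + 1) ω) (n : ℕ) :
    Measurable (X n) :=
  (measurable_iSup_Iic_of_recursion hX0 hS hJ hrec n).mono (iSup₂_le fun i _ => hle i) le_rfl

lemma integral_mul_sub_mul_integral_succ [IsFiniteMeasure P] (hle : ∀ i, m i ≤ mΩ)
    (hind : iIndep m P) (hX0 : Measurable[m 0] (X 0))
    (hS : ∀ t, Measurable[m (t + 1)] (S (t + 1))) (hJ : ∀ t, Measurable[m (t + 1)] (J (t + 1)))
    (hrec : ∀ t ω, X (t + 1) ω = X t ω * S (t + 1) ω + J (t + 1) ω)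
    (hX1 : ∀ t ω, |X t ω| ≤ 1) (hS1 : ∀ t ω, |S t ω| ≤ 1) (hJ1 : ∀ t ω, |J t ω| ≤ 1)
    {r n : ℕ} (hrn : r ≤ n) :
    (∫ ω, X r ω * X (n + 1) ω ∂P) - (∫ ω, X r ω ∂P) * (∫ ω, X (n + 1) ω ∂P) =
      (∫ ω, S (n + 1) ω ∂P) *
        ((∫ ω, X r ω * X n ω ∂P) - (∫ ω, X r ω ∂P) * (∫ ω, X n ω ∂P)) := by
  have mXr := measurable_of_recursion hle hX0 hS hJ hrec r
  have mXn := measurable_of_recursion hle hX0 hS hJ hrec n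
  have hXn := measurable_iSup_Iic_of_recursion hX0 hS hJ hrec n
  have hXr : Measurable[⨆ i ∈ Set.Iic n, m i] (X r) :=
    (measurable_iSup_Iic_of_recursion hX0 hS hJ hrec r).mono
      (biSup_mono fun i hi => Set.Iic_subset_Iic.2 hrn hi) le_rfl
  simp_rw [hrec n]
  exact integral_mul_sub_mul_integral_mul_add_of_indep (hind.indep_iSup_Iic_succ hle n) hXr hXn (hS n) (hJ n)
    (integrable_of_abs_le_one mXr (hX1 r)) (integrable_of_abs_le_one mXn (hX1 n))
    (integrable_of_abs_le_one (mXr.mul mXn) fun ω => by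
      simpa [abs_mul] using mul_le_one₀ (hX1 r ω) (abs_nonneg _) (hX1 n ω))
    (integrable_of_abs_le_one ((hS n).mono (hle _) le_rfl) (hS1 _))
    (integrable_of_abs_le_one ((hJ n).mono (hle _) le_rfl) (hJ1 _))

lemma integral_mul_sub_mul_integral_eq_prod [IsFiniteMeasure P] (hle : ∀ i, m i ≤ mΩ)
    (hind : iIndep m P) (hX0 : Measurable[m 0] (X 0))
    (hS : ∀ t, Measurable[m (t + 1)] (S (t + 1))) (hJ : ∀ t, Measurable[m (t + 1)] (J (t + 1)))
    (hrec : ∀ t ω, X (t + 1) ω = X t ω * S (t + 1) ω + J (t + 1) ω)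
    (hX1 : ∀ t ω, |X t ω| ≤ 1) (hS1 : ∀ t ω, |S t ω| ≤ 1) (hJ1 : ∀ t ω, |J t ω| ≤ 1)
    (r k : ℕ) :
    (∫ ω, X r ω * X (r + k) ω ∂P) - (∫ ω, X r ω ∂P) * (∫ ω, X (r + k) ω ∂P) =
      (∏ i ∈ Finset.range k, ∫ ω, S (r + i + 1) ω ∂P) *
        ((∫ ω, X r ω * X r ω ∂P) - (∫ ω, X r ω ∂P) * (∫ ω, X r ω ∂P)) := by
  induction k with
  | zero => simp
  | succ k ih =>
    rw [← add_assoc, integral_mul_sub_mul_integral_succ hle hind hX0 hS hJ hrec hX1 hS1 hJ1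
      (Nat.le_add_right r k), ih, Finset.prod_range_succ]
    ring

end Recursion

section EdgeProcess

variable {Ω : Type*} {mΩ : MeasurableSpace Ω} {P : Measure Ω} {E A : ℕ → Ω → ℝ}

lemma edge_eq_zero_or_one (hA0val : ∀ ω, A 0 ω ∈ ({0, 1} : Set ℝ))
    (hrec : ∀ t ω, A (t + 1) ω =
      A t ω * (if E (t + 1) ω = 0 then 1 else 0) + (if E (t + 1) ω = 1 then 1 else 0))
    (t : ℕ) (ω : Ω) : A t ω = 0 ∨ A t ω = 1 := by
  induction t with
  | zero => simpa using hA0val ω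
  | succ t ih =>
    rw [hrec]
    by_cases h1 : E (t + 1) ω = 1
    · simp [h1]
    · rcases ih with h | h <;> by_cases h0 : E (t + 1) ω = 0 <;> simp [h, h0, h1]

lemma edge_measurable (hEmeas : ∀ t, Measurable (E t)) (hA0meas : Measurable (A 0))
    (hrec : ∀ t ω, A (t + 1) ω =
      A t ω * (if E (t + 1) ω = 0 then 1 else 0) + (if E (t + 1) ω = 1 then 1 else 0))
    (t : ℕ) : Measurable (A t) :=
  measurable_of_recursion (m := fun _ => mΩ) (S := fun t ω => if E t ω = 0 then 1 else 0)
    (J := fun t ω => if E t ω = 1 then 1 else 0) (fun _ => le_rfl) hA0meas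
    (fun _ => measurable_ite_eq_one_zero (hEmeas _) 0)
    (fun _ => measurable_ite_eq_one_zero (hEmeas _) 1) hrec t

lemma edge_integral_mul_sub_mul_integral_eq_prod [IsFiniteMeasure P]
    (hEmeas : ∀ t, Measurable (E t)) (hA0meas : Measurable (A 0))
    (hA0val : ∀ ω, A 0 ω ∈ ({0, 1} : Set ℝ))
    (hIndep : iIndepFun (fun n : ℕ => if n = 0 then A 0 else E n) P)
    (hrec : ∀ t ω, A (t + 1) ω =
      A t ω * (if E (t + 1) ω = 0 then 1 else 0) + (if E (t + 1) ω = 1 then 1 else 0))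
    (r k : ℕ) :
    (∫ ω, A r ω * A (r + k) ω ∂P) - (∫ ω, A r ω ∂P) * (∫ ω, A (r + k) ω ∂P) =
      (∏ i ∈ Finset.range k, ∫ ω, (if E (r + i + 1) ω = 0 then (1 : ℝ) else 0) ∂P) *
        ((∫ ω, A r ω * A r ω ∂P) - (∫ ω, A r ω ∂P) * (∫ ω, A r ω ∂P)) := by
  set F : ℕ → Ω → ℝ := fun n => if n = 0 then A 0 else E n
  have hF : ∀ n, Measurable (F n) := fun n => by cases n <;> simp [F, hA0meas, hEmeas]
  have hA0 : Measurable[MeasurableSpace.comap (F 0) inferInstance] (A 0) := by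
    simpa [F] using comap_measurable (F 0)
  have hindicator : ∀ t (z : ℝ), Measurable[MeasurableSpace.comap (F (t + 1)) inferInstance]
      fun ω => if E (t + 1) ω = z then (1 : ℝ) else 0 := fun t z => by
    simpa [F] using measurable_ite_eq_one_zero (comap_measurable (F (t + 1))) z
  exact integral_mul_sub_mul_integral_eq_prod (X := A)
    (S := fun t ω => if E t ω = 0 then 1 else 0) (J := fun t ω => if E t ω = 1 then 1 else 0)
    (fun n => (hF n).comap_le) hIndep.iIndep hA0 (hindicator · 0) (hindicator · 1) hrec
    (fun t ω => by rcases edge_eq_zero_or_one hA0val hrec t ω with h | h <;> simp [h])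
    (fun t ω => by split_ifs <;> simp) (fun t ω => by split_ifs <;> simp) r k

lemma prod_integral_ite_eq_zero_mem_Icc [IsProbabilityMeasure P] {c : ℝ} {θ δ : ℕ → ℝ}
    (hEmeas : ∀ t, Measurable (E t))
    (hθ : ∀ t, 1 ≤ t → c ≤ θ t) (hδ : ∀ t, 1 ≤ t → c ≤ δ t)
    (hE1 : ∀ t, 1 ≤ t → P {ω | E t ω = 1} = ENNReal.ofReal (θ t))
    (hEneg : ∀ t, 1 ≤ t → P {ω | E t ω = -1} = ENNReal.ofReal (δ t)) (r k : ℕ) :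
    ∏ i ∈ Finset.range k, ∫ ω, (if E (r + i + 1) ω = 0 then (1 : ℝ) else 0) ∂P ∈
      Set.Icc 0 ((1 - 2 * c) ^ k) := by
  have hfactor : ∀ i, (0 ≤ ∫ ω, (if E (r + i + 1) ω = 0 then (1 : ℝ) else 0) ∂P) ∧
      ∫ ω, (if E (r + i + 1) ω = 0 then (1 : ℝ) else 0) ∂P ≤ 1 - 2 * c := fun i =>
    ⟨integral_nonneg fun ω => by split_ifs <;> norm_num,
      integral_ite_eq_zero_le_one_sub_two_mul (hEmeas _) (hθ _ (by omega)) (hδ _ (by omega))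
        (hE1 _ (by omega)) (hEneg _ (by omega))⟩
  refine ⟨Finset.prod_nonneg fun i _ => (hfactor i).1, ?_⟩
  simpa using Finset.prod_le_prod (s := Finset.range k) (fun i _ => (hfactor i).1)
    fun i _ => (hfactor i).2

end EdgeProcess

theorem stmt2_general
    {Ω : Type*} [MeasurableSpace Ω] (P : Measure Ω) [IsProbabilityMeasure P]
    (c : ℝ)
    (θ δ : ℕ → ℝ)
    (hθ : ∀ t, 1 ≤ t → θ t ∈ Set.Icc c (1 - c))
    (hδ : ∀ t, 1 ≤ t → δ t ∈ Set.Icc c (1 - c))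
    (E : ℕ → Ω → ℝ) (A : ℕ → Ω → ℝ)
    (hEmeas : ∀ t, Measurable (E t)) (hA0meas : Measurable (A 0))
    (hA0val : ∀ ω, A 0 ω ∈ ({0, 1} : Set ℝ))
    (hE1 : ∀ t, 1 ≤ t → P {ω | E t ω = 1} = ENNReal.ofReal (θ t))
    (hEneg : ∀ t, 1 ≤ t → P {ω | E t ω = -1} = ENNReal.ofReal (δ t))
    (hIndep : iIndepFun
      (fun n : ℕ => if n = 0 then A 0 else E n) P)
    (hrec : ∀ t ω, A (t + 1) ω =
      A t ω * (if E (t + 1) ω = 0 then 1 else 0) +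
        (if E (t + 1) ω = 1 then 1 else 0)) :
    ∀ r s : ℕ,
      0 ≤ (∫ ω, A r ω * A s ω ∂P) - (∫ ω, A r ω ∂P) * (∫ ω, A s ω ∂P) ∧
      (∫ ω, A r ω * A s ω ∂P) - (∫ ω, A r ω ∂P) * (∫ ω, A s ω ∂P) ≤
        1 / 4 * (1 - 2 * c) ^ ((r : ℤ) - (s : ℤ)).natAbs := by
  intro r s
  wlog hrs : r ≤ s generalizing r s
  · have hsr := this s r (le_of_not_ge hrs)
    rw [← Int.natAbs_neg, neg_sub] at hsr
    simpa only [mul_comm] using hsr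
  obtain ⟨k, rfl⟩ := Nat.exists_eq_add_of_le hrs
  have hprod := prod_integral_ite_eq_zero_mem_Icc (P := P) hEmeas (fun t ht => (hθ t ht).1)
    (fun t ht => (hδ t ht).1) hE1 hEneg r k
  have hvar := integral_mul_self_sub_sq_mem_Icc (P := P) (edge_measurable hEmeas hA0meas hrec r)
    (edge_eq_zero_or_one hA0val hrec r)
  rw [edge_integral_mul_sub_mul_integral_eq_prod hEmeas hA0meas hA0val hIndep hrec r k,
    show ((r : ℤ) - ((r + k : ℕ) : ℤ)).natAbs = k by omega]
  exact ⟨mul_nonneg hprod.1 hvar.1,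
    by nlinarith [mul_le_mul hprod.2 hvar.2 hvar.1 (hprod.1.trans hprod.2)]⟩

/-- **Covariance decay of the non-stationary AR(1) edge process.** With
`A_{t+1} = A_t·1{E_{t+1}=0} + 1{E_{t+1}=1}`, `(A_0, E_1, E_2, …)` mutually independent,
`P(E_t = 1) = θ_t`, `P(E_t = −1) = δ_t`, `θ_t, δ_t ∈ [c, 1−c]` and
`c ≤ P(A_0 = 1) ≤ 1 − c`: for all `r, s ≥ 0`,
`0 ≤ Cov(A_r, A_s) ≤ (1/4)·(1 − 2c)^{|r−s|}`. -/
theorem stmt2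
    {Ω : Type*} [MeasurableSpace Ω] (P : Measure Ω) [IsProbabilityMeasure P]
    (c : ℝ) (hc0 : 0 < c) (hc : c < 1 / 2)
    (θ δ : ℕ → ℝ)
    (hθ : ∀ t, 1 ≤ t → θ t ∈ Set.Icc c (1 - c))
    (hδ : ∀ t, 1 ≤ t → δ t ∈ Set.Icc c (1 - c))
    (E : ℕ → Ω → ℝ) (A : ℕ → Ω → ℝ)
    (hEmeas : ∀ t, Measurable (E t)) (hA0meas : Measurable (A 0))
    (hEval : ∀ t, 1 ≤ t → ∀ ω, E t ω ∈ ({-1, 0, 1} : Set ℝ))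
    (hA0val : ∀ ω, A 0 ω ∈ ({0, 1} : Set ℝ))
    (hE1 : ∀ t, 1 ≤ t → P {ω | E t ω = 1} = ENNReal.ofReal (θ t))
    (hEneg : ∀ t, 1 ≤ t → P {ω | E t ω = -1} = ENNReal.ofReal (δ t))
    (hA0low : c ≤ (P {ω | A 0 ω = 1}).toReal)
    (hA0high : (P {ω | A 0 ω = 1}).toReal ≤ 1 - c)
    (hIndep : iIndepFun
      (fun n : ℕ => if n = 0 then A 0 else E n) P)
    (hrec : ∀ t ω, A (t + 1) ω =
      A t ω * (if E (t + 1) ω = 0 then 1 else 0) +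
        (if E (t + 1) ω = 1 then 1 else 0)) :
    ∀ r s : ℕ,
      0 ≤ (∫ ω, A r ω * A s ω ∂P) - (∫ ω, A r ω ∂P) * (∫ ω, A s ω ∂P) ∧
      (∫ ω, A r ω * A s ω ∂P) - (∫ ω, A r ω ∂P) * (∫ ω, A s ω ∂P) ≤
        1 / 4 * (1 - 2 * c) ^ ((r : ℤ) - (s : ℤ)).natAbs :=
  stmt2_general P c θ δ hθ hδ E A hEmeas hA0meas hA0val hE1 hEneg hIndep hrec
end

section
/- Let (A_t)_{t≥0} be the non-stationary single-edge process with parameters (θ_t, δ_t)_{t≥1} ⊂ [c, 1−c]. Then for every integer t ≥ 0 and every integer k ≥ 1, every event A belonging to the σ-algebra generated by the random variables A_0, A_1, …, A_t and every event B belonging to the σ-algebra generated by the random variables (A_s)_{s ≥ t+k} satisfy |P(A ∩ B) − P(A)·P(B)| ≤ (1 − 2c)^k. In particular, the α-mixing coefficients of the process satisfy α(k) ≤ (1 − 2c)^k for every k ≥ 1, so the process (A_t)_{t≥0} is strongly mixing. -/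
/-!
Let `R` be the event that some innovation `E s` with `t < s ≤ t + k` is nonzero. Each `E s`
vanishes with probability `1 - θ s - δ s ≤ 1 - 2c`, so by independence `P Rᶜ ≤ (1 - 2c)^k`.
A nonzero innovation resets the edge to a value that depends on the innovation alone, so on `R`
every `A i` with `i ≥ t + k` equals the process restarted from `0` at time `t`, a function of the
innovations after `t`. Hence `T` agrees on `R` with an event `T'` of those innovations, which is
independent of the past σ-algebra containing `S`; the covariance of `S` and `T` then only sees
`Rᶜ`, and is at most `P Rᶜ` in absolute value.
-/

open MeasureTheory ProbabilityTheory
open scoped Classical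

noncomputable def edgeStep (a e : ℝ) : ℝ :=
  a * (if e = 0 then 1 else 0) + if e = 1 then 1 else 0

lemma edgeStep_eq_of_ne_zero {e : ℝ} (he : e ≠ 0) (a b : ℝ) : edgeStep a e = edgeStep b e := by
  simp [edgeStep, he]

noncomputable def edgeRun (e : ℕ → ℝ) (a : ℝ) : ℕ → ℝ
  | 0 => a
  | n + 1 => edgeStep (edgeRun e a n) (e n)

lemma edgeRun_eq_of_ne_zero {e : ℕ → ℝ} {j n : ℕ} (hjn : j < n) (he : e j ≠ 0) (a b : ℝ) :
    edgeRun e a n = edgeRun e b n := by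
  induction n with
  | zero => omega
  | succ n ih =>
    rcases Nat.lt_succ_iff_lt_or_eq.mp hjn with hj | rfl
    · simp only [edgeRun, ih hj]
    · exact edgeStep_eq_of_ne_zero he _ _

section Measurability

variable {Ω : Type*} {m : MeasurableSpace Ω}

lemma Measurable.edgeStep {a e : Ω → ℝ} (ha : Measurable[m] a) (he : Measurable[m] e) :
    Measurable[m] fun ω => edgeStep (a ω) (e ω) :=
  (ha.mul (Measurable.ite (he (measurableSet_singleton 0)) measurable_const measurable_const)).add
    (Measurable.ite (he (measurableSet_singleton 1)) measurable_const measurable_const)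

lemma Measurable.edgeRun {e : ℕ → Ω → ℝ} {a : Ω → ℝ} {n : ℕ} (ha : Measurable[m] a)
    (he : ∀ j < n, Measurable[m] (e j)) :
    Measurable[m] fun ω => edgeRun (fun j => e j ω) (a ω) n := by
  induction n with
  | zero => exact ha
  | succ n ih => exact (ih fun j hj => he j (by omega)).edgeStep (he n n.lt_succ_self)

lemma measurable_of_mem_biSup {ι β : Type*} [mβ : MeasurableSpace β] {f : ι → Ω → β}
    {s : Set ι} {i : ι} (hi : i ∈ s) : Measurable[⨆ j ∈ s, mβ.comap (f j)] (f i) :=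
  measurable_iff_comap_le.mpr (le_iSup₂ (f := fun j _ => mβ.comap (f j)) i hi)

lemma exists_measurableSet_inter_eq_of_eqOn {ι β : Type*} [mβ : MeasurableSpace β]
    {f g : ι → Ω → β} {s : Set ι} {R : Set Ω} (hfg : ∀ i ∈ s, Set.EqOn (f i) (g i) R)
    (hg : ∀ i ∈ s, Measurable[m] (g i)) {T : Set Ω}
    (hT : MeasurableSet[⨆ i ∈ s, mβ.comap (f i)] T) :
    ∃ T', MeasurableSet[m] T' ∧ T ∩ R = T' ∩ R := by
  have htrace : (⨆ i ∈ s, mβ.comap (f i)).comap ((↑) : R → Ω) ≤ m.comap (↑) := by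
    simp only [MeasurableSpace.comap_iSup, MeasurableSpace.comap_comp]
    refine iSup₂_le fun i hi => ?_
    have hrestrict : f i ∘ ((↑) : R → Ω) = g i ∘ (↑) := funext fun x => hfg i hi x.2
    rw [hrestrict, ← MeasurableSpace.comap_comp]
    exact MeasurableSpace.comap_mono (hg i hi).comap_le
  obtain ⟨T', hT', hTT'⟩ := htrace _ ⟨T, hT, rfl⟩
  refine ⟨T', hT', ?_⟩
  rw [Set.inter_comm, Set.inter_comm T']
  exact (Subtype.preimage_coe_eq_preimage_coe_iff.mp hTT').symm

end Measurability

section Probability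

variable {Ω : Type*} {mΩ : MeasurableSpace Ω} {P : Measure Ω}

lemma ProbabilityTheory.iIndepFun.measureReal_biInter_preimage_le {ι β : Type*}
    [MeasurableSpace β] {X : ι → Ω → β} (hX : iIndepFun X P) (I : Finset ι) {B : Set β}
    (hB : MeasurableSet B) {r : ℝ} (hr : ∀ i ∈ I, P.real (X i ⁻¹' B) ≤ r) :
    P.real (⋂ i ∈ I, X i ⁻¹' B) ≤ r ^ I.card := by
  rw [measureReal_def, hX.meas_biInter fun i _ => ⟨B, hB, rfl⟩, ENNReal.toReal_prod]
  calc ∏ i ∈ I, (P (X i ⁻¹' B)).toReal ≤ ∏ _i ∈ I, r :=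
        Finset.prod_le_prod (fun _ _ => ENNReal.toReal_nonneg) hr
    _ = r ^ I.card := Finset.prod_const r

lemma le_measureReal_of_eq_ofReal {s : Set Ω} {c x : ℝ} (hc : 0 ≤ c) (hx : c ≤ x)
    (h : P s = ENNReal.ofReal x) : c ≤ P.real s := by
  rwa [measureReal_def, h, ENNReal.toReal_ofReal (hc.trans hx)]

variable [IsProbabilityMeasure P]

lemma ProbabilityTheory.Indep.abs_measureReal_inter_sub_mul_le {m₁ m₂ : MeasurableSpace Ω}
    (hm₂ : m₂ ≤ mΩ) (hind : Indep m₁ m₂ P) {S T T' R : Set Ω} (hS : MeasurableSet[m₁] S)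
    (hT' : MeasurableSet[m₂] T') (hR : MeasurableSet[m₂] R) (hTR : T ∩ R = T' ∩ R) :
    |P.real (S ∩ T) - P.real S * P.real T| ≤ P.real Rᶜ := by
  have hR' : MeasurableSet[mΩ] R := hm₂ _ hR
  have hprod : P.real (S ∩ (T' ∩ R)) = P.real S * P.real (T' ∩ R) := by
    simp only [measureReal_def, (Indep_iff m₁ m₂ P).mp hind S _ hS (hT'.inter hR),
      ENNReal.toReal_mul]
  have hST : P.real (S ∩ T) = P.real S * P.real (T' ∩ R) + P.real ((S ∩ T) \ R) := by
    rw [← hprod, ← hTR, ← Set.inter_assoc, measureReal_inter_add_sdiff hR']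
  have hT : P.real T = P.real (T' ∩ R) + P.real (T \ R) := by
    rw [← hTR, measureReal_inter_add_sdiff hR']
  have hSTc : P.real ((S ∩ T) \ R) ≤ P.real Rᶜ := measureReal_mono fun _ h => h.2
  have hTc : P.real (T \ R) ≤ P.real Rᶜ := measureReal_mono fun _ h => h.2
  have hSTc₀ : 0 ≤ P.real ((S ∩ T) \ R) := measureReal_nonneg
  have hmul₀ : 0 ≤ P.real S * P.real (T \ R) := mul_nonneg measureReal_nonneg measureReal_nonneg
  have hmul : P.real S * P.real (T \ R) ≤ P.real (T \ R) :=
    mul_le_of_le_one_left measureReal_nonneg measureReal_le_one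
  rw [hST, hT, abs_le]
  constructor <;> linarith

lemma measureReal_setOf_eq_zero_le {e : Ω → ℝ} (he : Measurable e)
    (hval : ∀ ω, e ω ∈ ({-1, 0, 1} : Set ℝ)) {c : ℝ} (h1 : c ≤ P.real {ω | e ω = 1})
    (hneg : c ≤ P.real {ω | e ω = -1}) :
    P.real {ω | e ω = 0} ≤ 1 - 2 * c := by
  have hcompl : {ω | e ω = 0}ᶜ = {ω | e ω = 1} ∪ {ω | e ω = -1} := by
    ext ω
    have := hval ω
    simp only [Set.mem_insert_iff, Set.mem_singleton_iff] at this
    rcases this with h | h | h <;> simp [h]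
  have hdisj : Disjoint {ω | e ω = 1} {ω | e ω = -1} :=
    Set.disjoint_left.mpr fun ω (h : e ω = 1) (h' : e ω = -1) => by linarith
  have hsum := probReal_add_probReal_compl (μ := P) (s := {ω | e ω = 0})
    (he (measurableSet_singleton 0))
  rw [hcompl, measureReal_union hdisj (he (measurableSet_singleton (-1)))] at hsum
  linarith

end Probability

section EdgeProcess

variable {Ω : Type*} {X A : ℕ → Ω → ℝ}

lemma eq_edgeRun_of_step
    (hrec : ∀ t ω, A (t + 1) ω = edgeStep (A t ω) (X (t + 1) ω)) (t n : ℕ) (ω : Ω) :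
    A (t + n) ω = edgeRun (fun j => X (t + j + 1) ω) (A t ω) n := by
  induction n with
  | zero => rfl
  | succ n ih => rw [← add_assoc, hrec, ih]; rfl

lemma measurable_of_step (hrec : ∀ t ω, A (t + 1) ω = edgeStep (A t ω) (X (t + 1) ω))
    {m : MeasurableSpace Ω} {t : ℕ} (h0 : Measurable[m] (A 0))
    (hX : ∀ j, 1 ≤ j → j ≤ t → Measurable[m] (X j)) {i : ℕ} (hi : i ≤ t) :
    Measurable[m] (A i) := by
  have hA : A i = fun ω => edgeRun (fun j => X (j + 1) ω) (A 0 ω) i := by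
    ext ω
    simpa using eq_edgeRun_of_step hrec 0 i ω
  rw [hA]
  exact h0.edgeRun fun j hj => hX (j + 1) (by omega) (by omega)

lemma eqOn_edgeRun_zero_of_step (hrec : ∀ t ω, A (t + 1) ω = edgeStep (A t ω) (X (t + 1) ω))
    {t k i : ℕ} (hi : t + k ≤ i) :
    Set.EqOn (A i) (fun ω => edgeRun (fun j => X (t + j + 1) ω) 0 (i - t))
      (⋂ s ∈ Finset.Icc (t + 1) (t + k), X s ⁻¹' {0})ᶜ := by
  intro ω hω
  simp only [Set.mem_compl_iff, Set.mem_iInter, Set.mem_preimage, Set.mem_singleton_iff,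
    not_forall, Finset.mem_Icc] at hω
  obtain ⟨s, hs, hne⟩ := hω
  obtain ⟨n, rfl⟩ : ∃ n, i = t + n := ⟨i - t, by omega⟩
  rw [eq_edgeRun_of_step hrec, Nat.add_sub_cancel_left]
  have hj : t + (s - t - 1) + 1 = s := by omega
  exact edgeRun_eq_of_ne_zero (j := s - t - 1) (by omega) (by rwa [hj]) _ _

end EdgeProcess

theorem stmt3_general
    {Ω : Type*} [MeasurableSpace Ω] (P : Measure Ω) [IsProbabilityMeasure P]
    (c : ℝ) (hc0 : 0 < c)
    (θ δ : ℕ → ℝ)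
    (hθ : ∀ t, 1 ≤ t → θ t ∈ Set.Icc c (1 - c))
    (hδ : ∀ t, 1 ≤ t → δ t ∈ Set.Icc c (1 - c))
    (E : ℕ → Ω → ℝ) (A : ℕ → Ω → ℝ)
    (hEmeas : ∀ t, Measurable (E t)) (hA0meas : Measurable (A 0))
    (hEval : ∀ t, 1 ≤ t → ∀ ω, E t ω ∈ ({-1, 0, 1} : Set ℝ))
    (hE1 : ∀ t, 1 ≤ t → P {ω | E t ω = 1} = ENNReal.ofReal (θ t))
    (hEneg : ∀ t, 1 ≤ t → P {ω | E t ω = -1} = ENNReal.ofReal (δ t))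
    (hIndep : iIndepFun
      (fun n : ℕ => if n = 0 then A 0 else E n) P)
    (hrec : ∀ t ω, A (t + 1) ω =
      A t ω * (if E (t + 1) ω = 0 then 1 else 0) +
        (if E (t + 1) ω = 1 then 1 else 0)) :
    ∀ t k : ℕ, 1 ≤ k → ∀ S T : Set Ω,
      MeasurableSet[⨆ i ∈ Set.Iic t, MeasurableSpace.comap (A i) inferInstance] S →
      MeasurableSet[⨆ i ∈ Set.Ici (t + k), MeasurableSpace.comap (A i) inferInstance] T →
      |(P (S ∩ T)).toReal - (P S).toReal * (P T).toReal| ≤ (1 - 2 * c) ^ k := by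
  intro t k _ S T hS hT
  set X : ℕ → Ω → ℝ := fun n => if n = 0 then A 0 else E n
  have hXE : ∀ n, 1 ≤ n → X n = E n := fun n hn => if_neg (by omega)
  have hXmeas : ∀ n, Measurable (X n) := by
    rintro (_ | n)
    exacts [hA0meas, hEmeas _]
  have hXrec : ∀ t ω, A (t + 1) ω = edgeStep (A t ω) (X (t + 1) ω) := fun t ω => by
    rw [hXE _ t.succ_pos]; exact hrec t ω
  set Mpast := ⨆ j ∈ Set.Iic t, MeasurableSpace.comap (X j) inferInstance
  set Mfut := ⨆ j ∈ Set.Ici (t + 1), MeasurableSpace.comap (X j) inferInstance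
  have hind : Indep Mpast Mfut P := indep_iSup_of_disjoint (fun i => (hXmeas i).comap_le)
    hIndep.iIndep (Set.Iic_disjoint_Ici.mpr (by omega))
  have hApast : ∀ i ∈ Set.Iic t, Measurable[Mpast] (A i) := fun i hi =>
    measurable_of_step hXrec (measurable_of_mem_biSup (f := X) (Set.mem_Iic.mpr t.zero_le))
      (fun j _ hj => measurable_of_mem_biSup hj) hi
  have hS' : MeasurableSet[Mpast] S := iSup₂_le (fun i hi => (hApast i hi).comap_le) S hS
  set R := (⋂ s ∈ Finset.Icc (t + 1) (t + k), X s ⁻¹' {0})ᶜ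
  have hR : MeasurableSet[Mfut] R := (Finset.measurableSet_biInter _ fun s hs =>
    measurable_of_mem_biSup (Set.mem_Ici.mpr (Finset.mem_Icc.mp hs).1)
      (measurableSet_singleton 0)).compl
  obtain ⟨T', hT', hTR⟩ := exists_measurableSet_inter_eq_of_eqOn (m := Mfut)
    (fun i hi => eqOn_edgeRun_zero_of_step hXrec (Set.mem_Ici.mp hi))
    (fun i _ => measurable_const.edgeRun fun j _ =>
      measurable_of_mem_biSup (Set.mem_Ici.mpr (by omega))) hT
  have hzero : ∀ s ∈ Finset.Icc (t + 1) (t + k), P.real (X s ⁻¹' {0}) ≤ 1 - 2 * c := by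
    intro s hs
    have hs1 : 1 ≤ s := by simp only [Finset.mem_Icc] at hs; omega
    rw [hXE s hs1]
    exact measureReal_setOf_eq_zero_le (hEmeas s) (hEval s hs1)
      (le_measureReal_of_eq_ofReal hc0.le (hθ s hs1).1 (hE1 s hs1))
      (le_measureReal_of_eq_ofReal hc0.le (hδ s hs1).1 (hEneg s hs1))
  have hRc : P.real Rᶜ ≤ (1 - 2 * c) ^ k := by
    simpa [R] using hIndep.measureReal_biInter_preimage_le _ (measurableSet_singleton 0) hzero
  exact (hind.abs_measureReal_inter_sub_mul_le (iSup₂_le fun i _ => (hXmeas i).comap_le)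
    hS' hT' hR hTR).trans hRc

/-- **Strong mixing of the non-stationary AR(1) edge process.** With
`A_{t+1} = A_t·1{E_{t+1}=0} + 1{E_{t+1}=1}`, `(A_0, E_1, E_2, …)` mutually independent,
`P(E_t = 1) = θ_t`, `P(E_t = −1) = δ_t`, `θ_t, δ_t ∈ [c, 1−c]` and
`c ≤ P(A_0 = 1) ≤ 1 − c`: for every `t ≥ 0`, `k ≥ 1`, every event `S` in the σ-algebra
generated by `A_0, …, A_t` and every event `T` in the σ-algebra generated by
`(A_s)_{s ≥ t+k}`, `|P(S ∩ T) − P(S)·P(T)| ≤ (1 − 2c)^k`; hence the α-mixing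
coefficients satisfy `α(k) ≤ (1 − 2c)^k → 0`, i.e. the process is strongly mixing. -/
theorem stmt3
    {Ω : Type*} [MeasurableSpace Ω] (P : Measure Ω) [IsProbabilityMeasure P]
    (c : ℝ) (hc0 : 0 < c) (hc : c < 1 / 2)
    (θ δ : ℕ → ℝ)
    (hθ : ∀ t, 1 ≤ t → θ t ∈ Set.Icc c (1 - c))
    (hδ : ∀ t, 1 ≤ t → δ t ∈ Set.Icc c (1 - c))
    (E : ℕ → Ω → ℝ) (A : ℕ → Ω → ℝ)
    (hEmeas : ∀ t, Measurable (E t)) (hA0meas : Measurable (A 0))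
    (hEval : ∀ t, 1 ≤ t → ∀ ω, E t ω ∈ ({-1, 0, 1} : Set ℝ))
    (hA0val : ∀ ω, A 0 ω ∈ ({0, 1} : Set ℝ))
    (hE1 : ∀ t, 1 ≤ t → P {ω | E t ω = 1} = ENNReal.ofReal (θ t))
    (hEneg : ∀ t, 1 ≤ t → P {ω | E t ω = -1} = ENNReal.ofReal (δ t))
    (hA0low : c ≤ (P {ω | A 0 ω = 1}).toReal)
    (hA0high : (P {ω | A 0 ω = 1}).toReal ≤ 1 - c)
    (hIndep : iIndepFun
      (fun n : ℕ => if n = 0 then A 0 else E n) P)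
    (hrec : ∀ t ω, A (t + 1) ω =
      A t ω * (if E (t + 1) ω = 0 then 1 else 0) +
        (if E (t + 1) ω = 1 then 1 else 0)) :
    ∀ t k : ℕ, 1 ≤ k → ∀ S T : Set Ω,
      MeasurableSet[⨆ i ∈ Set.Iic t, MeasurableSpace.comap (A i) inferInstance] S →
      MeasurableSet[⨆ i ∈ Set.Ici (t + k), MeasurableSpace.comap (A i) inferInstance] T →
      |(P (S ∩ T)).toReal - (P S).toReal * (P T).toReal| ≤ (1 - 2 * c) ^ k :=
  stmt3_general P c hc0 θ δ hθ hδ E A hEmeas hA0meas hEval hE1 hEneg hIndep hrec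
end

section
/- Let c ∈ (0, 1/2) and C_π ≥ 1. Let (θ_t)_{t≥0}, (δ_t)_{t≥0} be real sequences with θ_t, δ_t ∈ [c, 1 − c] for all t, and let (π_t)_{t≥0} ⊂ [0, 1] satisfy π_t = θ_t + (1 − θ_t − δ_t)·π_{t−1} for all t ≥ 1. Assume the base bound |π_1 − π_0| ≤ C_π·(|θ_1 − θ_0| + |δ_1 − δ_0|). Then for every u ≥ 1, |π_u − π_{u−1}| ≤ C_π · Σ_{v=1}^{u} (1 − 2c)^{u−v}·(|θ_v − θ_{v−1}| + |δ_v − δ_{v−1}|). -/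
/-!
Writing `π_t = θ_t (1 - π_{t-1}) + (1 - δ_t) π_{t-1}`, the increment `π_{t+1} - π_t` splits into
a part driven by the parameter changes, bounded by `|θ_{t+1} - θ_t| + |δ_{t+1} - δ_t|` because
`π_t ∈ [0, 1]`, plus `(1 - θ_t - δ_t)(π_t - π_{t-1})`, a contraction by `|1 - θ_t - δ_t| ≤ 1 - 2c`.
Unrolling this one-step inequality from the base bound gives the geometric sum.
-/

open Finset

theorem sum_Icc_one_pow_sub_mul_succ {R : Type*} [CommSemiring R] (q : R) (a : ℕ → R) (n : ℕ) :
    ∑ v ∈ Icc 1 (n + 1), q ^ (n + 1 - v) * a v =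
      a (n + 1) + q * ∑ v ∈ Icc 1 n, q ^ (n - v) * a v := by
  rw [sum_Icc_succ_top (by omega), Nat.sub_self, pow_zero, one_mul, add_comm, mul_sum]
  congr 1
  refine sum_congr rfl fun v hv => ?_
  rw [Nat.sub_add_comm (mem_Icc.1 hv).2, pow_succ']
  ring

section

variable {R : Type*} [CommRing R] [LinearOrder R] [IsStrictOrderedRing R]

theorem abs_one_sub_sub_le_one_sub_two_mul {c θ δ : R} (hθ : θ ∈ Set.Icc c (1 - c))
    (hδ : δ ∈ Set.Icc c (1 - c)) : |1 - θ - δ| ≤ 1 - 2 * c := by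
  obtain ⟨hθc, hθc'⟩ := hθ
  obtain ⟨hδc, hδc'⟩ := hδ
  rw [abs_le]
  constructor <;> linarith

theorem abs_affine_step_sub_le {θ δ θ' δ' p p' q : R} (hp' : p' ∈ Set.Icc 0 1)
    (hcoef : |1 - θ - δ| ≤ q) :
    |(θ' + (1 - θ' - δ') * p') - (θ + (1 - θ - δ) * p)| ≤
      |θ' - θ| + |δ' - δ| + q * |p' - p| := by
  obtain ⟨hp0, hp1⟩ := hp'
  have hsplit : (θ' + (1 - θ' - δ') * p') - (θ + (1 - θ - δ) * p) =
      (θ' - θ) * (1 - p') - (δ' - δ) * p' + (1 - θ - δ) * (p' - p) := by ring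
  have habs1 : |1 - p'| ≤ 1 := abs_le.2 ⟨by linarith, by linarith⟩
  have habs2 : |p'| ≤ 1 := abs_le.2 ⟨by linarith, hp1⟩
  rw [hsplit]
  calc |(θ' - θ) * (1 - p') - (δ' - δ) * p' + (1 - θ - δ) * (p' - p)|
      ≤ |θ' - θ| * |1 - p'| + |δ' - δ| * |p'| + |1 - θ - δ| * |p' - p| := by
        rw [← abs_mul, ← abs_mul, ← abs_mul]
        exact (abs_add_le _ _).trans (add_le_add_left (abs_sub _ _) _)
    _ ≤ |θ' - θ| * 1 + |δ' - δ| * 1 + q * |p' - p| := by gcongr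
    _ = |θ' - θ| + |δ' - δ| + q * |p' - p| := by ring

/-- Discrete Grönwall inequality. -/
theorem le_mul_sum_pow_mul_of_le_add_mul {q C : R} {a e : ℕ → R} (hq : 0 ≤ q) (hC : 1 ≤ C)
    (ha : ∀ n, 0 ≤ a n) (hbase : e 1 ≤ C * a 1)
    (hstep : ∀ n, 1 ≤ n → e (n + 1) ≤ a (n + 1) + q * e n) :
    ∀ u, 1 ≤ u → e u ≤ C * ∑ v ∈ Icc 1 u, q ^ (u - v) * a v := by
  intro u hu
  induction u, hu using Nat.le_induction with
  | base => simpa using hbase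
  | succ n hn ih =>
    calc e (n + 1) ≤ a (n + 1) + q * e n := hstep n hn
      _ ≤ C * a (n + 1) + q * (C * ∑ v ∈ Icc 1 n, q ^ (n - v) * a v) := by
        gcongr
        exact le_mul_of_one_le_left (ha _) hC
      _ = C * ∑ v ∈ Icc 1 (n + 1), q ^ (n + 1 - v) * a v := by
        rw [sum_Icc_one_pow_sub_mul_succ]
        ring

end

theorem stmt7_general (c Cpi : ℝ) (hCpi : 1 ≤ Cpi)
    (θ δ : ℕ → ℝ)
    (hθ : ∀ t, θ t ∈ Set.Icc c (1 - c)) (hδ : ∀ t, δ t ∈ Set.Icc c (1 - c))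
    (pr : ℕ → ℝ) (hpr : ∀ t, pr t ∈ Set.Icc (0 : ℝ) 1)
    (hrec : ∀ t : ℕ, 1 ≤ t → pr t = θ t + (1 - θ t - δ t) * pr (t - 1))
    (hbase : |pr 1 - pr 0| ≤ Cpi * (|θ 1 - θ 0| + |δ 1 - δ 0|)) :
    ∀ u : ℕ, 1 ≤ u →
      |pr u - pr (u - 1)| ≤
        Cpi * ∑ v ∈ Finset.Icc 1 u,
          (1 - 2 * c) ^ (u - v) * (|θ v - θ (v - 1)| + |δ v - δ (v - 1)|) := by
  have hq : 0 ≤ 1 - 2 * c := by linarith [(hθ 0).1, (hθ 0).2]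
  refine le_mul_sum_pow_mul_of_le_add_mul hq hCpi (fun v => by positivity) hbase fun n hn => ?_
  have hnext := hrec (n + 1) (by omega)
  rw [Nat.add_sub_cancel] at hnext ⊢
  have hstep := abs_affine_step_sub_le (θ' := θ (n + 1)) (δ' := δ (n + 1)) (p := pr (n - 1))
    (hpr n) (abs_one_sub_sub_le_one_sub_two_mul (hθ n) (hδ n))
  rwa [← hrec n hn, ← hnext] at hstep

/-- **Geometric-decay bound for the increments of the marginals.**
If `π_t = θ_t + (1 − θ_t − δ_t)·π_{t−1}` with `θ_t, δ_t ∈ [c, 1 − c]`, `π_t ∈ [0,1]`, and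
`|π_1 − π_0| ≤ C_π(|θ_1 − θ_0| + |δ_1 − δ_0|)`, then for every `u ≥ 1`,
`|π_u − π_{u−1}| ≤ C_π Σ_{v=1}^u (1 − 2c)^{u−v}(|θ_v − θ_{v−1}| + |δ_v − δ_{v−1}|)`. -/
theorem stmt7 (c Cpi : ℝ) (hc0 : 0 < c) (hc : c < 1 / 2) (hCpi : 1 ≤ Cpi)
    (θ δ : ℕ → ℝ)
    (hθ : ∀ t, θ t ∈ Set.Icc c (1 - c)) (hδ : ∀ t, δ t ∈ Set.Icc c (1 - c))
    (pr : ℕ → ℝ) (hpr : ∀ t, pr t ∈ Set.Icc (0 : ℝ) 1)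
    (hrec : ∀ t : ℕ, 1 ≤ t → pr t = θ t + (1 - θ t - δ t) * pr (t - 1))
    (hbase : |pr 1 - pr 0| ≤ Cpi * (|θ 1 - θ 0| + |δ 1 - δ 0|)) :
    ∀ u : ℕ, 1 ≤ u →
      |pr u - pr (u - 1)| ≤
        Cpi * ∑ v ∈ Finset.Icc 1 u,
          (1 - 2 * c) ^ (u - v) * (|θ v - θ (v - 1)| + |δ v - δ (v - 1)|) :=
  stmt7_general c Cpi hCpi θ δ hθ hδ pr hpr hrec hbase
end

section
/- For every c ∈ (0, 1/2) and all θ, δ, θ′, δ′ ∈ [c, 1 − c], kl(θ/(θ + δ), θ′/(θ′ + δ′)) ≤ (8 / c⁶)·((θ − θ′)² + (δ − δ′)²). -/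
/-!
Bounding `log x ≤ x - 1` in both terms turns `kl(p, q)` into the χ²-divergence
`(p - q)² / (q (1 - q))`. The map `(θ, δ) ↦ θ / (θ + δ)` is Lipschitz on the box: the
difference of two values has numerator `θ δ' - θ' δ = θ (δ' - δ) + δ (θ - θ')` and denominator
at least `4c²`. Finally `q = θ' / (θ' + δ')` stays in `[c/2, 1 - c/2]`, so `q (1 - q) ≥ c²/4`.
-/

/-- The binary Kullback–Leibler divergence `kl(p, q)` between `Bernoulli(p)` and
`Bernoulli(q)` (with the convention `0·log 0 = 0`, automatic since `Real.log 0 = 0`). -/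
noncomputable def klBin (p q : ℝ) : ℝ :=
  p * Real.log (p / q) + (1 - p) * Real.log ((1 - p) / (1 - q))

lemma mul_log_div_le {x y : ℝ} (hx : 0 ≤ x) (hy : 0 < y) :
    x * Real.log (x / y) ≤ x * (x / y - 1) := by
  rcases hx.eq_or_lt with rfl | hx
  · simp
  · exact mul_le_mul_of_nonneg_left (Real.log_le_sub_one_of_pos (div_pos hx hy)) hx.le

lemma klBin_le_chiSq {p q : ℝ} (hp0 : 0 ≤ p) (hp1 : p ≤ 1) (hq0 : 0 < q) (hq1 : q < 1) :
    klBin p q ≤ (p - q) ^ 2 / (q * (1 - q)) := by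
  have hq1' : 0 < 1 - q := sub_pos.mpr hq1
  calc klBin p q ≤ p * (p / q - 1) + (1 - p) * ((1 - p) / (1 - q) - 1) :=
        add_le_add (mul_log_div_le hp0 hq0) (mul_log_div_le (sub_nonneg.mpr hp1) hq1')
    _ = (p - q) ^ 2 / (q * (1 - q)) := by
        field_simp
        ring

lemma sq_div_add_sub_div_add_le {c θ δ θ' δ' : ℝ} (hc : 0 < c) (hθ : |θ| ≤ 1) (hδ : |δ| ≤ 1)
    (hs : 2 * c ≤ θ + δ) (hs' : 2 * c ≤ θ' + δ') :
    (θ / (θ + δ) - θ' / (θ' + δ')) ^ 2 ≤ ((θ - θ') ^ 2 + (δ - δ') ^ 2) / (8 * c ^ 4) := by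
  have hpos : 0 < θ + δ := by linarith
  have hpos' : 0 < θ' + δ' := by linarith
  have hdiff : θ / (θ + δ) - θ' / (θ' + δ') =
      (θ * (δ' - δ) + δ * (θ - θ')) / ((θ + δ) * (θ' + δ')) := by
    field_simp
    ring
  have hnum : (θ * (δ' - δ) + δ * (θ - θ')) ^ 2 ≤ 2 * ((θ - θ') ^ 2 + (δ - δ') ^ 2) := by
    have hθsq : θ ^ 2 ≤ 1 := by nlinarith [abs_le.mp hθ]
    have hδsq : δ ^ 2 ≤ 1 := by nlinarith [abs_le.mp hδ]
    nlinarith [sq_nonneg (θ * (δ' - δ) - δ * (θ - θ')),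
      mul_nonneg (sub_nonneg.mpr hθsq) (sq_nonneg (δ' - δ)),
      mul_nonneg (sub_nonneg.mpr hδsq) (sq_nonneg (θ - θ'))]
  have hden : 2 * c * (2 * c) ≤ (θ + δ) * (θ' + δ') :=
    mul_le_mul hs hs' (by positivity) hpos.le
  calc (θ / (θ + δ) - θ' / (θ' + δ')) ^ 2
      = (θ * (δ' - δ) + δ * (θ - θ')) ^ 2 / ((θ + δ) * (θ' + δ')) ^ 2 := by
        rw [hdiff, div_pow]
    _ ≤ 2 * ((θ - θ') ^ 2 + (δ - δ') ^ 2) / (2 * c * (2 * c)) ^ 2 := by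
        gcongr
    _ = ((θ - θ') ^ 2 + (δ - δ') ^ 2) / (8 * c ^ 4) := by
        field_simp
        ring

lemma sq_div_four_le_div_add_mul_one_sub {c θ δ : ℝ} (hc : 0 < c) (hθ : c ≤ θ) (hδ : c ≤ δ)
    (hs : θ + δ ≤ 2) : c ^ 2 / 4 ≤ θ / (θ + δ) * (1 - θ / (θ + δ)) := by
  have hpos : 0 < θ + δ := by linarith
  have hlow : c / 2 ≤ θ / (θ + δ) := by
    rw [le_div_iff₀ hpos]
    nlinarith
  have hhigh : c / 2 ≤ 1 - θ / (θ + δ) := by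
    rw [one_sub_div hpos.ne', add_sub_cancel_left, le_div_iff₀ hpos]
    nlinarith
  calc c ^ 2 / 4 = c / 2 * (c / 2) := by ring
    _ ≤ θ / (θ + δ) * (1 - θ / (θ + δ)) := mul_le_mul hlow hhigh (by positivity) (by linarith)

theorem stmt9_general (c : ℝ) (hc0 : 0 < c)
    (θ δ θ' δ' : ℝ)
    (hθ : θ ∈ Set.Icc c (1 - c)) (hδ : δ ∈ Set.Icc c (1 - c))
    (hθ' : θ' ∈ Set.Icc c (1 - c)) (hδ' : δ' ∈ Set.Icc c (1 - c)) :
    klBin (θ / (θ + δ)) (θ' / (θ' + δ')) ≤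
      8 / c ^ 6 * ((θ - θ') ^ 2 + (δ - δ') ^ 2) := by
  obtain ⟨hθc, hθ1⟩ := hθ
  obtain ⟨hδc, hδ1⟩ := hδ
  obtain ⟨hθ'c, hθ'1⟩ := hθ'
  obtain ⟨hδ'c, hδ'1⟩ := hδ'
  have hpos : 0 < θ + δ := by linarith
  have hpos' : 0 < θ' + δ' := by linarith
  have hq : c ^ 2 / 4 ≤ θ' / (θ' + δ') * (1 - θ' / (θ' + δ')) :=
    sq_div_four_le_div_add_mul_one_sub hc0 hθ'c hδ'c (by linarith)
  have hsq : (θ / (θ + δ) - θ' / (θ' + δ')) ^ 2 ≤ ((θ - θ') ^ 2 + (δ - δ') ^ 2) / (8 * c ^ 4) :=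
    sq_div_add_sub_div_add_le hc0 (abs_le.mpr ⟨by linarith, by linarith⟩)
      (abs_le.mpr ⟨by linarith, by linarith⟩) (by linarith) (by linarith)
  calc klBin (θ / (θ + δ)) (θ' / (θ' + δ'))
      ≤ (θ / (θ + δ) - θ' / (θ' + δ')) ^ 2 / (θ' / (θ' + δ') * (1 - θ' / (θ' + δ'))) :=
        klBin_le_chiSq (div_nonneg (by linarith) hpos.le) (div_le_one_of_le₀ (by linarith) hpos.le)
          (div_pos (by linarith) hpos') ((div_lt_one hpos').mpr (by linarith))
    _ ≤ ((θ - θ') ^ 2 + (δ - δ') ^ 2) / (8 * c ^ 4) / (c ^ 2 / 4) :=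
        div_le_div₀ (by positivity) hsq (by positivity) hq
    _ = 1 / 2 / c ^ 6 * ((θ - θ') ^ 2 + (δ - δ') ^ 2) := by
        field_simp
        ring
    _ ≤ 8 / c ^ 6 * ((θ - θ') ^ 2 + (δ - δ') ^ 2) := by
        gcongr
        norm_num

/-- **KL bound between stationary marginals.** For `θ, δ, θ′, δ′ ∈ [c, 1 − c]`,
`kl(θ/(θ+δ), θ′/(θ′+δ′)) ≤ (8/c⁶)·((θ−θ′)² + (δ−δ′)²)`. -/
theorem stmt9 (c : ℝ) (hc0 : 0 < c) (hc : c < 1 / 2)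
    (θ δ θ' δ' : ℝ)
    (hθ : θ ∈ Set.Icc c (1 - c)) (hδ : δ ∈ Set.Icc c (1 - c))
    (hθ' : θ' ∈ Set.Icc c (1 - c)) (hδ' : δ' ∈ Set.Icc c (1 - c)) :
    klBin (θ / (θ + δ)) (θ' / (θ' + δ')) ≤
      8 / c ^ 6 * ((θ - θ') ^ 2 + (δ - δ') ^ 2) :=
  stmt9_general c hc0 θ δ θ' δ' hθ hδ hθ' hδ'
end

section
/- Let k ≥ 1 be an integer, let θ₁, …, θ_k be real numbers, and let w₁, …, w_k be real numbers with w_i ≥ c for all i, where c > 0. Then | (Σ_{i=1}^k θ_i w_i) / (Σ_{i=1}^k w_i) − (1/k)·Σ_{i=1}^k θ_i | ≤ (1/(2c)) · max_{i,j} |θ_i − θ_j| · max_{i,j} |w_i − w_j|. -/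
open Finset

/-! Symmetrizing, `∑ᵢ θᵢ wᵢ / ∑ᵢ wᵢ - θ̄ = ∑ᵢⱼ (θᵢ - θⱼ)(wᵢ - wⱼ) / (2 k ∑ᵢ wᵢ)`.
Each of the `k²` terms of the double sum is at most `max |θᵢ - θⱼ| · max |wᵢ - wⱼ|`
in absolute value, while `∑ᵢ wᵢ ≥ k c`. -/

section WeightedMean

variable {ι : Type*} {s : Finset ι}

theorem sum_sum_sub_mul_sub {R : Type*} [CommRing R] (f g : ι → R) :
    ∑ i ∈ s, ∑ j ∈ s, (f i - f j) * (g i - g j) =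
      2 * (#s * ∑ i ∈ s, f i * g i - (∑ i ∈ s, f i) * ∑ i ∈ s, g i) := by
  simp only [sub_mul, mul_sub, sum_sub_distrib, ← mul_sum, ← sum_mul, sum_const, nsmul_eq_mul,
    mul_left_comm _ (#s : R)]
  ring

theorem weighted_mean_sub_mean_eq {K : Type*} [Field K] [CharZero K] (hs : s.Nonempty)
    (f g : ι → K) (hg : ∑ i ∈ s, g i ≠ 0) :
    (∑ i ∈ s, f i * g i) / (∑ i ∈ s, g i) - 1 / (#s : K) * ∑ i ∈ s, f i =
      (∑ i ∈ s, ∑ j ∈ s, (f i - f j) * (g i - g j)) / (2 * #s * ∑ i ∈ s, g i) := by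
  have hcard : (#s : K) ≠ 0 := Nat.cast_ne_zero.mpr hs.card_pos.ne'
  rw [sum_sum_sub_mul_sub]
  field_simp

theorem abs_sum_sum_sub_mul_sub_le {f g : ι → ℝ} {A B : ℝ}
    (hf : ∀ i ∈ s, ∀ j ∈ s, |f i - f j| ≤ A) (hg : ∀ i ∈ s, ∀ j ∈ s, |g i - g j| ≤ B)
    (hA : 0 ≤ A) :
    |∑ i ∈ s, ∑ j ∈ s, (f i - f j) * (g i - g j)| ≤ #s ^ 2 * (A * B) := by
  calc |∑ i ∈ s, ∑ j ∈ s, (f i - f j) * (g i - g j)|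
      ≤ ∑ i ∈ s, ∑ j ∈ s, |(f i - f j) * (g i - g j)| :=
        (abs_sum_le_sum_abs _ _).trans (sum_le_sum fun i _ ↦ abs_sum_le_sum_abs _ _)
    _ ≤ ∑ _i ∈ s, ∑ _j ∈ s, A * B := by
        gcongr with i hi j hj
        rw [abs_mul]
        exact mul_le_mul (hf i hi j hj) (hg i hi j hj) (abs_nonneg _) hA
    _ = #s ^ 2 * (A * B) := by simp only [sum_const, nsmul_eq_mul]; ring

theorem abs_weighted_mean_sub_mean_le {f g : ι → ℝ} {c A B : ℝ} (hc : 0 < c) (hs : s.Nonempty)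
    (hgc : ∀ i ∈ s, c ≤ g i) (hf : ∀ i ∈ s, ∀ j ∈ s, |f i - f j| ≤ A)
    (hg : ∀ i ∈ s, ∀ j ∈ s, |g i - g j| ≤ B) :
    |(∑ i ∈ s, f i * g i) / (∑ i ∈ s, g i) - 1 / (#s : ℝ) * ∑ i ∈ s, f i| ≤
      1 / (2 * c) * A * B := by
  obtain ⟨i₀, hi₀⟩ := hs
  have hA : 0 ≤ A := (abs_nonneg _).trans (hf i₀ hi₀ i₀ hi₀)
  have hB : 0 ≤ B := (abs_nonneg _).trans (hg i₀ hi₀ i₀ hi₀)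
  have hcard : (0 : ℝ) < #s := Nat.cast_pos.mpr (card_pos.mpr ⟨i₀, hi₀⟩)
  have hsum : #s * c ≤ ∑ i ∈ s, g i := by simpa using card_nsmul_le_sum s g c hgc
  have hsum_pos : 0 < ∑ i ∈ s, g i := lt_of_lt_of_le (by positivity) hsum
  rw [weighted_mean_sub_mean_eq ⟨i₀, hi₀⟩ f g hsum_pos.ne', abs_div,
    abs_of_pos (by positivity : (0 : ℝ) < 2 * #s * ∑ i ∈ s, g i), div_le_iff₀ (by positivity)]
  calc |∑ i ∈ s, ∑ j ∈ s, (f i - f j) * (g i - g j)|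
      ≤ #s ^ 2 * (A * B) := abs_sum_sum_sub_mul_sub_le hf hg hA
    _ = 1 / (2 * c) * A * B * (2 * #s * (#s * c)) := by field_simp
    _ ≤ 1 / (2 * c) * A * B * (2 * #s * ∑ i ∈ s, g i) := by gcongr

end WeightedMean

/-- **Weighted vs. unweighted average bound.** If `w_i ≥ c > 0` then
`|(Σθ_i w_i)/(Σw_i) − (1/k)Σθ_i| ≤ (1/(2c))·max_{i,j}|θ_i−θ_j|·max_{i,j}|w_i−w_j|`. -/
theorem stmt16 (k : ℕ) [NeZero k] (c : ℝ) (hc : 0 < c)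
    (θ w : Fin k → ℝ) (hw : ∀ i, c ≤ w i) :
    |(∑ i, θ i * w i) / (∑ i, w i) - (1 / (k : ℝ)) * ∑ i, θ i| ≤
      1 / (2 * c) * (⨆ p : Fin k × Fin k, |θ p.1 - θ p.2|) *
        (⨆ p : Fin k × Fin k, |w p.1 - w p.2|) := by
  have le_iSup_pairs (v : Fin k → ℝ) (i j : Fin k) :
      |v i - v j| ≤ ⨆ p : Fin k × Fin k, |v p.1 - v p.2| :=
    le_ciSup (f := fun p : Fin k × Fin k ↦ |v p.1 - v p.2|)
      (Set.finite_range _).bddAbove (i, j)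
  simpa using abs_weighted_mean_sub_mean_le hc univ_nonempty (fun i _ ↦ hw i)
    (fun i _ j _ ↦ le_iSup_pairs θ i j) (fun i _ j _ ↦ le_iSup_pairs w i j)
end

section
/- Let p ≥ 2 and let u₁, …, u_p be real numbers. For a real x write x₊ = max(x, 0) and x₋ = max(−x, 0). Suppose there exists C_α ∈ [0, 1) such that Σ_{t=1}^{p−1} (u_{t+1} − u_t)₋ ≤ C_α · Σ_{t=1}^{p−1} (u_{t+1} − u_t)₊. Then Σ_{t=1}^{p−1} |u_{t+1} − u_t| ≤ ((1 + C_α)/(1 − C_α)) · (u_p − u₁); in particular u_p ≥ u₁. -/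
open Finset

/-!
Write `P` and `N` for the total positive and negative variation. The total variation is `P + N`
and the sum telescopes to `u_p - u₁ = P - N`, so the claim reduces to the scalar inequality
`(1 - C)(P + N) ≤ (1 + C)(P - N)`, which is `N ≤ C P` rearranged.
-/

lemma add_le_div_mul_sub_of_le_mul {P N C : ℝ} (hP : 0 ≤ P) (hC : C < 1) (h : N ≤ C * P) :
    P + N ≤ (1 + C) / (1 - C) * (P - N) ∧ N ≤ P := by
  have hC' : 0 < 1 - C := sub_pos.mpr hC
  refine ⟨?_, by nlinarith⟩
  rw [div_mul_eq_mul_div, le_div_iff₀ hC']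
  nlinarith

section

variable {ι : Type*}

lemma sum_abs_eq_sum_posPart_add_sum_negPart (s : Finset ι) (d : ι → ℝ) :
    ∑ i ∈ s, |d i| = ∑ i ∈ s, (d i)⁺ + ∑ i ∈ s, (d i)⁻ := by
  simp only [← sum_add_distrib, posPart_add_negPart]

lemma sum_eq_sum_posPart_sub_sum_negPart (s : Finset ι) (d : ι → ℝ) :
    ∑ i ∈ s, d i = ∑ i ∈ s, (d i)⁺ - ∑ i ∈ s, (d i)⁻ := by
  simp only [← sum_sub_distrib, posPart_sub_negPart]

theorem sum_abs_le_of_sum_negPart_le_mul_sum_posPart (s : Finset ι) (d : ι → ℝ)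
    {C : ℝ} (hC : C < 1) (h : ∑ i ∈ s, (d i)⁻ ≤ C * ∑ i ∈ s, (d i)⁺) :
    ∑ i ∈ s, |d i| ≤ (1 + C) / (1 - C) * ∑ i ∈ s, d i ∧ 0 ≤ ∑ i ∈ s, d i := by
  have hP : 0 ≤ ∑ i ∈ s, (d i)⁺ := sum_nonneg fun i _ ↦ posPart_nonneg (d i)
  rw [sum_abs_eq_sum_posPart_add_sum_negPart, sum_eq_sum_posPart_sub_sum_negPart s d, sub_nonneg]
  exact add_le_div_mul_sub_of_le_mul hP hC h

end

theorem stmt17_general (p : ℕ) (hp : 2 ≤ p) (u : ℕ → ℝ)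
    (Cα : ℝ) (hC1 : Cα < 1)
    (hdom : ∑ t ∈ Finset.Icc 1 (p - 1), max (-(u (t + 1) - u t)) 0 ≤
      Cα * ∑ t ∈ Finset.Icc 1 (p - 1), max (u (t + 1) - u t) 0) :
    ∑ t ∈ Finset.Icc 1 (p - 1), |u (t + 1) - u t| ≤
      (1 + Cα) / (1 - Cα) * (u p - u 1) ∧ u 1 ≤ u p := by
  have htel : ∑ t ∈ Icc 1 (p - 1), (u (t + 1) - u t) = u p - u 1 := by
    rw [sum_Icc_sub (by omega), Nat.sub_add_cancel (by omega)]
  -- `hdom` is accepted as is: on `ℝ`, `x⁺` and `x⁻` unfold to `max x 0` and `max (-x) 0`.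
  obtain ⟨hvar, hmono⟩ :=
    sum_abs_le_of_sum_negPart_le_mul_sum_posPart _ (fun t ↦ u (t + 1) - u t) hC1 hdom
  rw [htel] at hvar hmono
  exact ⟨hvar, sub_nonneg.mp hmono⟩

/-- **Total-variation bound for dominantly monotone sequences.** If the total negative
variation of `u₁, …, u_p` is at most `C_α` times the total positive variation,
`C_α ∈ [0, 1)`, then `Σ_{t=1}^{p−1}|u_{t+1} − u_t| ≤ ((1+C_α)/(1−C_α))(u_p − u₁)`; in
particular `u_p ≥ u₁`. -/
theorem stmt17 (p : ℕ) (hp : 2 ≤ p) (u : ℕ → ℝ)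
    (Cα : ℝ) (hC0 : 0 ≤ Cα) (hC1 : Cα < 1)
    (hdom : ∑ t ∈ Finset.Icc 1 (p - 1), max (-(u (t + 1) - u t)) 0 ≤
      Cα * ∑ t ∈ Finset.Icc 1 (p - 1), max (u (t + 1) - u t) 0) :
    ∑ t ∈ Finset.Icc 1 (p - 1), |u (t + 1) - u t| ≤
      (1 + Cα) / (1 - Cα) * (u p - u 1) ∧ u 1 ≤ u p :=
  stmt17_general p hp u Cα hC1 hdom
end
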